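/- arXiv:1807.04536 — 2 statements merged into one kernel-verified Lean document; each statement's English description precedes it below -/
import Mathlib

section
/- Let A be an n×n hidden Z-matrix. If there exists a vector x > 0 such that Ax ≥ 0, then every principal submatrix A_{ββ} of A (for β a nonempty subset of indices) is itself a hidden Z-matrix, and moreover there exists a vector y > 0 with A_{ββ} y ≥ 0. -/
open Matrix

/-- A Z-matrix: all off-diagonal entries are nonpositive. -/
def IsZMatrix {ι : Type*} [Fintype ι] [DecidableEq ι] (A : Matrix ι ι ℝ) : Prop :=
  ∀ i j, i ≠ j → A i j ≤ 0

/-- A hidden Z-matrix: AX = Y for Z-matrices X, Y, with rᵀX + sᵀY > 0 for some r, s ≥ 0. -/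
def IsHiddenZ {ι : Type*} [Fintype ι] [DecidableEq ι] (A : Matrix ι ι ℝ) : Prop :=
  ∃ X Y : Matrix ι ι ℝ, ∃ r s : ι → ℝ,
    IsZMatrix X ∧ IsZMatrix Y ∧ A * X = Y ∧
    (∀ i, 0 ≤ r i) ∧ (∀ i, 0 ≤ s i) ∧
    (∀ j, 0 < (Matrix.vecMul r X + Matrix.vecMul s Y) j)

/-- The principal minor of `A` indexed by `α`. -/
def principalMinor {ι : Type*} [Fintype ι] [DecidableEq ι] (A : Matrix ι ι ℝ)
    (α : Finset ι) : ℝ :=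
  (A.submatrix (fun i : {x // x ∈ α} => (i : ι)) (fun j : {x // x ∈ α} => (j : ι))).det

/-!
If `X, Y` are Z-matrices and `rᵀX + sᵀY > 0` with `r, s ≥ 0`, then `Xz ≥ 0` and `Yz ≥ 0` force
`z ≥ 0`: the negative part `w` of `z` has `Xw ≤ 0` and `Yw ≤ 0`, so `(rᵀX + sᵀY) w ≤ 0`.
Hence `X` is invertible and `z = X⁻¹x` satisfies `z ≥ 0`, `Xz = x > 0`, `Yz = Ax ≥ 0`.

Split the indices into `β` and its complement. The block `X₂₂` is a Z-matrix with
`X₂₂ z₂ = x₂ - X₂₁ z₁ > 0`, so it is a nonsingular M-matrix with `N = X₂₂⁻¹ ≥ 0`. Eliminating it,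
`X' = X₁₁ - X₁₂ N X₂₁` and `Y' = Y₁₁ - Y₁₂ N X₂₁` are Z-matrices with `A_ββ X' = Y'`, and
`X' z₁ = x₁ - X₁₂ N x₂ ≥ x₁ > 0`, `Y' z₁ = (Ax)₁ - Y₁₂ N x₂ ≥ 0`. So `y = X' z₁` works, and
`X'` is an M-matrix, whence `r = 1ᵀ X'⁻¹ ≥ 0`, `s = 0` certify that `A_ββ` is a hidden Z-matrix.
-/

section Signs

variable {l m n : Type*} [Fintype m]

theorem Matrix.mulVec_nonneg_of_nonneg {P : Matrix l m ℝ} (hP : ∀ i j, 0 ≤ P i j) {v : m → ℝ}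
    (hv : 0 ≤ v) : 0 ≤ P *ᵥ v :=
  fun _ => Finset.sum_nonneg fun j _ => mul_nonneg (hP _ j) (hv j)

theorem Matrix.mulVec_nonpos_of_nonpos {P : Matrix l m ℝ} (hP : ∀ i j, P i j ≤ 0) {v : m → ℝ}
    (hv : 0 ≤ v) : P *ᵥ v ≤ 0 :=
  fun _ => Finset.sum_nonpos fun j _ => mul_nonpos_of_nonpos_of_nonneg (hP _ j) (hv j)

theorem Matrix.mul_apply_nonpos_of_nonneg_of_nonpos {P : Matrix l m ℝ} {Q : Matrix m n ℝ}
    (hP : ∀ i j, 0 ≤ P i j) (hQ : ∀ i j, Q i j ≤ 0) (i : l) (k : n) : (P * Q) i k ≤ 0 :=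
  Finset.sum_nonpos fun j _ => mul_nonpos_of_nonneg_of_nonpos (hP i j) (hQ j k)

theorem Matrix.mul_apply_nonneg_of_nonpos {P : Matrix l m ℝ} {Q : Matrix m n ℝ}
    (hP : ∀ i j, P i j ≤ 0) (hQ : ∀ i j, Q i j ≤ 0) (i : l) (k : n) : 0 ≤ (P * Q) i k :=
  Finset.sum_nonneg fun j _ => mul_nonneg_of_nonpos_of_nonpos (hP i j) (hQ j k)

end Signs

section ZMatrix

variable {ι : Type*} [Fintype ι] [DecidableEq ι]

theorem IsZMatrix.transpose {M : Matrix ι ι ℝ} (hM : IsZMatrix M) : IsZMatrix Mᵀ :=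
  fun i j hij => hM j i hij.symm

theorem IsZMatrix.mulVec_apply_nonpos {M : Matrix ι ι ℝ} (hM : IsZMatrix M) {v : ι → ℝ}
    (hv : 0 ≤ v) {i : ι} (hvi : v i = 0) : (M *ᵥ v) i ≤ 0 :=
  Finset.sum_nonpos fun j _ => by
    rcases eq_or_ne i j with rfl | hij
    · simp [hvi]
    · exact mul_nonpos_of_nonpos_of_nonneg (hM i j hij) (hv j)

theorem IsZMatrix.mulVec_negPart_nonpos {M : Matrix ι ι ℝ} (hM : IsZMatrix M) {z : ι → ℝ}
    (hMz : 0 ≤ M *ᵥ z) : M *ᵥ z⁻ ≤ 0 := by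
  intro i
  rcases le_or_gt 0 (z i) with hzi | hzi
  · exact hM.mulVec_apply_nonpos (negPart_nonneg z) (negPart_eq_zero.2 hzi)
  · have hsplit : M *ᵥ z⁻ = M *ᵥ z⁺ - M *ᵥ z := by
      rw [← mulVec_sub, ← sub_sub_cancel z⁺ z⁻, posPart_sub_negPart]
    have hpos : (M *ᵥ z⁺) i ≤ 0 :=
      hM.mulVec_apply_nonpos (posPart_nonneg z) (posPart_eq_zero.2 hzi.le)
    rw [hsplit, Pi.sub_apply, Pi.zero_apply]
    linarith [show 0 ≤ (M *ᵥ z) i from hMz i]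

theorem IsZMatrix.nonneg_of_mulVec_nonneg {X Y : Matrix ι ι ℝ} (hX : IsZMatrix X)
    (hY : IsZMatrix Y) {r s : ι → ℝ} (hr : 0 ≤ r) (hs : 0 ≤ s)
    (hpos : ∀ j, 0 < (r ᵥ* X + s ᵥ* Y) j) {z : ι → ℝ} (hXz : 0 ≤ X *ᵥ z)
    (hYz : 0 ≤ Y *ᵥ z) : 0 ≤ z := by
  have hdot : (r ᵥ* X + s ᵥ* Y) ⬝ᵥ z⁻ ≤ 0 := by
    rw [add_dotProduct, ← dotProduct_mulVec, ← dotProduct_mulVec]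
    have hXw := dotProduct_le_dotProduct_of_nonneg_left (hX.mulVec_negPart_nonpos hXz) hr
    have hYw := dotProduct_le_dotProduct_of_nonneg_left (hY.mulVec_negPart_nonpos hYz) hs
    rw [dotProduct_zero] at hXw hYw
    linarith
  intro i
  have hi : (r ᵥ* X + s ᵥ* Y) i * z⁻ i ≤ 0 :=
    (Finset.single_le_sum (fun j _ => mul_nonneg (hpos j).le (negPart_nonneg z j))
      (Finset.mem_univ i)).trans hdot
  exact negPart_nonpos.1 (nonpos_of_mul_nonpos_right hi (hpos i))

theorem IsZMatrix.sub_mul_of_nonpos {m n : Type*} [Fintype m] [DecidableEq m] [Fintype n]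
    {M₁₁ : Matrix m m ℝ} (h₁₁ : IsZMatrix M₁₁) {M₁₂ : Matrix m n ℝ} (h₁₂ : ∀ i j, M₁₂ i j ≤ 0)
    {G : Matrix n m ℝ} (hG : ∀ i j, G i j ≤ 0) : IsZMatrix (M₁₁ - M₁₂ * G) := fun i j hij => by
  rw [Matrix.sub_apply]
  linarith [h₁₁ i j hij, mul_apply_nonneg_of_nonpos h₁₂ hG i j]

end ZMatrix

section Inverse

variable {ι : Type*} [Fintype ι] [DecidableEq ι]

theorem Matrix.isUnit_det_of_nonneg_of_mulVec_eq_zero {M : Matrix ι ι ℝ}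
    (h : ∀ v, M *ᵥ v = 0 → 0 ≤ v) : IsUnit M.det := by
  refine isUnit_iff_ne_zero.2 fun hdet => ?_
  obtain ⟨v, hv0, hMv⟩ := exists_mulVec_eq_zero_iff.2 hdet
  have hneg : 0 ≤ -v := h (-v) (by rw [mulVec_neg, hMv, neg_zero])
  exact hv0 (le_antisymm (neg_nonneg.1 hneg) (h v hMv))

theorem Matrix.inv_apply_nonneg_of_nonneg_of_mulVec_nonneg {M : Matrix ι ι ℝ}
    (h : ∀ v, 0 ≤ M *ᵥ v → 0 ≤ v) (i j : ι) : 0 ≤ M⁻¹ i j := by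
  have hdet : IsUnit M.det := isUnit_det_of_nonneg_of_mulVec_eq_zero fun v hv => h v hv.ge
  have hcol : M *ᵥ M⁻¹.col j = Pi.single j 1 := by
    rw [← mulVec_single_one, mulVec_mulVec, mul_nonsing_inv _ hdet, one_mulVec]
  exact h _ (hcol ▸ Pi.single_nonneg.2 zero_le_one) i

/-- Duality: `uᵀ Wᵀ = (W u)ᵀ > 0`, so the sign lemma applies to `X = Y = Wᵀ`. -/
theorem IsZMatrix.nonneg_of_transpose_mulVec_nonneg {W : Matrix ι ι ℝ} (hW : IsZMatrix W)
    {u : ι → ℝ} (hu : 0 ≤ u) (hWu : ∀ i, 0 < (W *ᵥ u) i) {v : ι → ℝ}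
    (hv : 0 ≤ Wᵀ *ᵥ v) : 0 ≤ v :=
  hW.transpose.nonneg_of_mulVec_nonneg hW.transpose hu le_rfl
    (by simpa [vecMul_transpose] using hWu) hv hv

theorem IsZMatrix.isUnit_det_of_mulVec_pos {W : Matrix ι ι ℝ} (hW : IsZMatrix W)
    {u : ι → ℝ} (hu : 0 ≤ u) (hWu : ∀ i, 0 < (W *ᵥ u) i) : IsUnit W.det := by
  rw [← det_transpose]
  exact isUnit_det_of_nonneg_of_mulVec_eq_zero fun v hv =>
    hW.nonneg_of_transpose_mulVec_nonneg hu hWu hv.ge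

theorem IsZMatrix.inv_apply_nonneg_of_mulVec_pos {W : Matrix ι ι ℝ} (hW : IsZMatrix W)
    {u : ι → ℝ} (hu : 0 ≤ u) (hWu : ∀ i, 0 < (W *ᵥ u) i) (i j : ι) : 0 ≤ W⁻¹ i j := by
  rw [← transpose_apply W⁻¹, transpose_nonsing_inv]
  exact inv_apply_nonneg_of_nonneg_of_mulVec_nonneg
    (fun v hv => hW.nonneg_of_transpose_mulVec_nonneg hu hWu hv) j i

theorem isHiddenZ_of_mulVec_pos {A X Y : Matrix ι ι ℝ} (hX : IsZMatrix X) (hY : IsZMatrix Y)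
    (hAXY : A * X = Y) {u : ι → ℝ} (hu : 0 ≤ u) (hXu : ∀ i, 0 < (X *ᵥ u) i) :
    IsHiddenZ A := by
  refine ⟨X, Y, (fun _ => 1) ᵥ* X⁻¹, 0, hX, hY, hAXY, fun j => ?_, fun _ => le_rfl, fun j => ?_⟩
  · exact Finset.sum_nonneg fun i _ => by
      simpa using hX.inv_apply_nonneg_of_mulVec_pos hu hXu i j
  · rw [zero_vecMul, add_zero, vecMul_vecMul,
      nonsing_inv_mul _ (hX.isUnit_det_of_mulVec_pos hu hXu), vecMul_one]
    exact one_pos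

end Inverse

section Blocks

variable {l m n R : Type*}

theorem Matrix.mulVec_restrict_eq_add [Fintype m] [NonUnitalNonAssocSemiring R]
    (M : Matrix l m R) (v : m → R) (p : l → Prop) (q : m → Prop) [DecidablePred q] :
    (fun i : {a // p a} => (M *ᵥ v) i) =
      M.toBlock p q *ᵥ (fun j : {a // q a} => v j) +
        M.toBlock p (fun j => ¬ q j) *ᵥ (fun j : {a // ¬ q a} => v j) := by
  funext i
  exact (Fintype.sum_subtype_add_sum_subtype q fun j => M i j * v j).symm

variable [Fintype m] [Fintype n] [DecidableEq n]

theorem Matrix.mul_sub_mul_mul_eq [Ring R] {A₁₁ X₁₁ Y₁₁ : Matrix m m R}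
    {A₁₂ X₁₂ Y₁₂ : Matrix m n R} {X₂₁ : Matrix n m R} {X₂₂ N : Matrix n n R}
    (h₁ : A₁₁ * X₁₁ + A₁₂ * X₂₁ = Y₁₁) (h₂ : A₁₁ * X₁₂ + A₁₂ * X₂₂ = Y₁₂) (hN : X₂₂ * N = 1) :
    A₁₁ * (X₁₁ - X₁₂ * (N * X₂₁)) = Y₁₁ - Y₁₂ * (N * X₂₁) := by
  rw [← h₁, ← h₂, Matrix.mul_sub, Matrix.add_mul, Matrix.mul_assoc A₁₁ X₁₂,
    Matrix.mul_assoc A₁₂ X₂₂, ← Matrix.mul_assoc X₂₂, hN, Matrix.one_mul]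
  abel

theorem Matrix.sub_mul_mul_mulVec [CommRing R] (M₁₁ : Matrix m m R) (M₁₂ : Matrix m n R)
    {X₂₁ : Matrix n m R} {X₂₂ N : Matrix n n R} (hN : N * X₂₂ = 1) (z₁ : m → R) (z₂ : n → R) :
    (M₁₁ - M₁₂ * (N * X₂₁)) *ᵥ z₁ =
      M₁₁ *ᵥ z₁ + M₁₂ *ᵥ z₂ - M₁₂ *ᵥ (N *ᵥ (X₂₁ *ᵥ z₁ + X₂₂ *ᵥ z₂)) := by
  simp only [sub_mulVec, mulVec_add, mulVec_mulVec, ← Matrix.mul_assoc, hN, Matrix.mul_one]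
  abel

end Blocks

section PrincipalBlock

variable {ι : Type*} [Fintype ι] [DecidableEq ι]

theorem IsZMatrix.toBlock {M : Matrix ι ι ℝ} (hM : IsZMatrix M) (p : ι → Prop)
    [DecidablePred p] : IsZMatrix (M.toBlock p p) :=
  fun _ _ hij => hM _ _ (Subtype.coe_injective.ne hij)

theorem IsZMatrix.toBlock_apply_nonpos {M : Matrix ι ι ℝ} (hM : IsZMatrix M) {p q : ι → Prop}
    (hpq : ∀ i, p i → ¬ q i) (i : {a // p a}) (j : {a // q a}) : M.toBlock p q i j ≤ 0 :=
  hM i j fun h => hpq i i.2 (h ▸ j.2)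

theorem IsZMatrix.exists_toBlock_mul_eq {A X Y : Matrix ι ι ℝ} (hX : IsZMatrix X)
    (hY : IsZMatrix Y) (hAXY : A * X = Y) {z : ι → ℝ} (hz : 0 ≤ z)
    (hXz : ∀ i, 0 < (X *ᵥ z) i) (hYz : 0 ≤ Y *ᵥ z) (p : ι → Prop) [DecidablePred p] :
    ∃ X' Y' : Matrix {i // p i} {i // p i} ℝ, IsZMatrix X' ∧ IsZMatrix Y' ∧
      A.toBlock p p * X' = Y' ∧ (∀ i, 0 < (X' *ᵥ fun j => z j) i) ∧
      0 ≤ Y' *ᵥ fun j => z j := by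
  let q : ι → Prop := fun i => ¬ p i
  let z₁ : {i // p i} → ℝ := fun j => z j
  let z₂ : {i // q i} → ℝ := fun j => z j
  have hpq : ∀ i, p i → ¬ q i := fun _ hp hq => hq hp
  have hqp : ∀ i, q i → ¬ p i := fun _ hq => hq
  have hx₂ := mulVec_restrict_eq_add X z q p
  have hX₂₂z₂ : ∀ i, 0 < (X.toBlock q q *ᵥ z₂) i := fun i => by
    have hx₂i := congrFun hx₂ i
    have hX₂₁z₁ : (X.toBlock q p *ᵥ z₁) i ≤ 0 :=
      mulVec_nonpos_of_nonpos (hX.toBlock_apply_nonpos hqp) (fun j => hz j) i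
    simp only [Pi.add_apply] at hx₂i
    linarith [hXz i]
  have hX₂₂det := (hX.toBlock q).isUnit_det_of_mulVec_pos (fun j => hz j) hX₂₂z₂
  set N := (X.toBlock q q)⁻¹
  have hN : ∀ i j, 0 ≤ N i j :=
    (hX.toBlock q).inv_apply_nonneg_of_mulVec_pos (fun j => hz j) hX₂₂z₂
  have hG : ∀ i j, (N * X.toBlock q p) i j ≤ 0 :=
    mul_apply_nonpos_of_nonneg_of_nonpos hN (hX.toBlock_apply_nonpos hqp)
  have hNx₂ : 0 ≤ N *ᵥ fun i : {a // q a} => (X *ᵥ z) i :=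
    mulVec_nonneg_of_nonneg hN fun i => (hXz i).le
  have hSchur : ∀ M, IsZMatrix M →
      IsZMatrix (M.toBlock p p - M.toBlock p q * (N * X.toBlock q p)) ∧
      (fun i : {a // p a} => (M *ᵥ z) i) ≤
        (M.toBlock p p - M.toBlock p q * (N * X.toBlock q p)) *ᵥ z₁ := fun M hM =>
    ⟨(hM.toBlock p).sub_mul_of_nonpos (hM.toBlock_apply_nonpos hpq) hG, by
      rw [sub_mul_mul_mulVec _ _ (nonsing_inv_mul _ hX₂₂det) z₁ z₂, ← hx₂,
        ← mulVec_restrict_eq_add M z p p]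
      exact (le_sub_self_iff _).2 (mulVec_nonpos_of_nonpos (hM.toBlock_apply_nonpos hpq) hNx₂)⟩
  obtain ⟨hX', hXz'⟩ := hSchur X hX
  obtain ⟨hY', hYz'⟩ := hSchur Y hY
  refine ⟨_, _, hX', hY',
    mul_sub_mul_mul_eq (A₁₂ := A.toBlock p q) ?_ ?_ (mul_nonsing_inv _ hX₂₂det),
    fun i => (hXz i).trans_le (hXz' i), le_trans (fun i => hYz i) hYz'⟩
  · rw [← toBlock_mul_eq_add, hAXY]
  · rw [← toBlock_mul_eq_add, hAXY]

end PrincipalBlock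

theorem IsHiddenZ.toBlock {ι : Type*} [Fintype ι] [DecidableEq ι] {A : Matrix ι ι ℝ}
    (hA : IsHiddenZ A) {x : ι → ℝ} (hx : ∀ i, 0 < x i) (hAx : 0 ≤ A *ᵥ x) (p : ι → Prop)
    [DecidablePred p] :
    IsHiddenZ (A.toBlock p p) ∧
      ∃ y : {i // p i} → ℝ, (∀ i, 0 < y i) ∧ ∀ i, 0 ≤ (A.toBlock p p *ᵥ y) i := by
  obtain ⟨X, Y, r, s, hX, hY, hAXY, hr, hs, hpos⟩ := hA
  have hYmulVec : ∀ v, Y *ᵥ v = A *ᵥ (X *ᵥ v) := fun v => by rw [← hAXY, mulVec_mulVec]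
  have hXdet : IsUnit X.det := isUnit_det_of_nonneg_of_mulVec_eq_zero fun v hv =>
    hX.nonneg_of_mulVec_nonneg hY hr hs hpos hv.ge (by rw [hYmulVec, hv, mulVec_zero])
  set z := X⁻¹ *ᵥ x
  have hXz : X *ᵥ z = x := by rw [mulVec_mulVec, mul_nonsing_inv _ hXdet, one_mulVec]
  have hYz : 0 ≤ Y *ᵥ z := by rwa [hYmulVec, hXz]
  have hz : 0 ≤ z := hX.nonneg_of_mulVec_nonneg hY hr hs hpos (hXz ▸ fun i => (hx i).le) hYz
  obtain ⟨X', Y', hX', hY', hAXY', hX'z, hY'z⟩ :=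
    hX.exists_toBlock_mul_eq hY hAXY hz (hXz ▸ hx) hYz p
  refine ⟨isHiddenZ_of_mulVec_pos hX' hY' hAXY' (fun i => hz i) hX'z, X' *ᵥ fun j => z j, hX'z, ?_⟩
  rw [mulVec_mulVec, hAXY']
  exact hY'z

theorem hiddenZ_principal_submatrix {n : ℕ} (A : Matrix (Fin n) (Fin n) ℝ)
    (hA : IsHiddenZ A) (x : Fin n → ℝ) (hx : ∀ i, 0 < x i)
    (hAx : ∀ i, 0 ≤ A.mulVec x i) :
    ∀ β : Finset (Fin n), β.Nonempty →
      IsHiddenZ (A.submatrix (fun i : {x // x ∈ β} => (i : Fin n))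
          (fun j : {x // x ∈ β} => (j : Fin n))) ∧
      ∃ y : {x // x ∈ β} → ℝ, (∀ i, 0 < y i) ∧
        ∀ i, 0 ≤ (A.submatrix (fun i : {x // x ∈ β} => (i : Fin n))
          (fun j : {x // x ∈ β} => (j : Fin n))).mulVec y i := by
  intro β _
  -- `convert` identifies the two `Fintype` instances on `{x // x ∈ β}` that appear here.
  convert hA.toBlock hx hAx (· ∈ β) <;> rfl
end

section
/- Every positive type D matrix is a hidden Z-matrix. -/
open Matrix

/-!
Write `L` for the lower triangular matrix of ones and `d` for the increments
`α i - α (i - 1)` of `α` (with `α (-1) = 0`), all positive. Then `A = L * diag d * Lᵀ`, so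
`A⁻¹ = Kᵀ * diag d⁻¹ * K` where `K = L⁻¹` is the bidiagonal backward-difference matrix.
The two nonzero entries in each row of `K` have opposite signs, so `A⁻¹` is a Z-matrix, and
`X = A⁻¹`, `Y = 1`, `r = 0`, `s = 1` witness that `A` is a hidden Z-matrix.
-/

theorem isHiddenZ_of_mul_eq_one {ι : Type*} [Fintype ι] [DecidableEq ι] {A X : Matrix ι ι ℝ}
    (hX : IsZMatrix X) (hAX : A * X = 1) : IsHiddenZ A :=
  ⟨X, 1, 0, 1, hX, fun _ _ h => (one_apply_ne h).le, hAX, fun _ => le_rfl,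
    fun _ => zero_le_one, fun _ => by simp⟩

theorem isZMatrix_transpose_mul_diagonal_mul {ι : Type*} [Fintype ι] [DecidableEq ι]
    {K : Matrix ι ι ℝ} {d : ι → ℝ} (hK : ∀ k i j, i ≠ j → K k i * K k j ≤ 0)
    (hd : ∀ k, 0 ≤ d k) : IsZMatrix (Kᵀ * diagonal d * K) := by
  intro i j hij
  rw [mul_apply]
  refine Finset.sum_nonpos fun k _ => ?_
  rw [mul_diagonal, transpose_apply, mul_right_comm]
  exact mul_nonpos_of_nonpos_of_nonneg (hK k i j hij) (hd k)

namespace Matrix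

variable {n : ℕ}

def typeD (α : Fin n → ℝ) : Matrix (Fin n) (Fin n) ℝ :=
  of fun i j => α (min i j)

def backwardDiff (n : ℕ) : Matrix (Fin n) (Fin n) ℝ :=
  of fun i j => if i = j then 1 else if (i : ℕ) = j + 1 then -1 else 0

def cumSum (n : ℕ) : Matrix (Fin n) (Fin n) ℝ :=
  of fun i j => if j ≤ i then 1 else 0

theorem backwardDiff_mulVec_apply (v : Fin n → ℝ) (i : Fin n) :
    (backwardDiff n *ᵥ v) i = v i - if h : (i : ℕ) = 0 then 0 else v ⟨i - 1, by omega⟩ := by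
  simp only [mulVec, dotProduct, backwardDiff, of_apply]
  split_ifs with h
  · have : ∀ k : Fin n, (i : ℕ) ≠ k + 1 := by omega
    simp [this]
  · have hK : ∀ k : Fin n, (if i = k then (1 : ℝ) else if (i : ℕ) = k + 1 then -1 else 0) =
        (if k = i then 1 else 0) - if k = ⟨i - 1, by omega⟩ then 1 else 0 := by
      intro k
      simp only [Fin.ext_iff]
      split_ifs <;> first | omega | norm_num
    simp [hK, sub_mul, Finset.sum_sub_distrib]

theorem backwardDiff_mulVec_pos {α : Fin n → ℝ} (hpos : ∀ i, 0 < α i)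
    (hmono : StrictMono α) (i : Fin n) : 0 < (backwardDiff n *ᵥ α) i := by
  rw [backwardDiff_mulVec_apply]
  split_ifs with h
  · simpa using hpos i
  · exact sub_pos.2 (hmono (Fin.lt_def.2 (show (i : ℕ) - 1 < i by omega)))

theorem cumSum_mul_backwardDiff : cumSum n * backwardDiff n = 1 := by
  rw [mul_eq_one_comm]
  ext i j
  rw [mul_apply', ← mulVec, backwardDiff_mulVec_apply]
  simp only [cumSum, of_apply, one_apply, Fin.ext_iff, Fin.le_def]
  split_ifs <;> first | omega | norm_num

theorem backwardDiff_apply_mul_backwardDiff_apply_nonpos (k i j : Fin n) (hij : i ≠ j) :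
    backwardDiff n k i * backwardDiff n k j ≤ 0 := by
  have : (i : ℕ) ≠ j := Fin.val_ne_of_ne hij
  simp only [backwardDiff, of_apply, Fin.ext_iff]
  split_ifs <;> first | omega | norm_num

theorem cumSum_apply_mul_cumSum_apply (i j k : Fin n) :
    cumSum n i k * cumSum n j k = cumSum n (min i j) k := by
  simp only [cumSum, of_apply, ite_zero_mul_ite_zero, mul_one, le_min_iff]

theorem typeD_eq_cumSum_mul_diagonal_mul_transpose (α : Fin n → ℝ) :
    typeD α = cumSum n * diagonal (backwardDiff n *ᵥ α) * (cumSum n)ᵀ := by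
  ext i j
  calc typeD α i j = (cumSum n *ᵥ (backwardDiff n *ᵥ α)) (min i j) := by
        rw [mulVec_mulVec, cumSum_mul_backwardDiff, one_mulVec, typeD, of_apply]
    _ = ∑ k, cumSum n i k * (backwardDiff n *ᵥ α) k * cumSum n j k := by
        simp only [mulVec, dotProduct, mul_right_comm _ _ (cumSum n j _),
          ← cumSum_apply_mul_cumSum_apply]
    _ = _ := by simp only [mul_apply (M := _ * _), mul_diagonal, transpose_apply]

theorem typeD_mul_eq_one {α : Fin n → ℝ} (hd : ∀ k, (backwardDiff n *ᵥ α) k ≠ 0) :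
    typeD α *
      ((backwardDiff n)ᵀ * diagonal (backwardDiff n *ᵥ α)⁻¹ * backwardDiff n) = 1 := by
  rw [typeD_eq_cumSum_mul_diagonal_mul_transpose]
  set K := backwardDiff n
  set L := cumSum n
  set d := K *ᵥ α
  have hKL : K * L = 1 := mul_eq_one_comm.1 cumSum_mul_backwardDiff
  have hdd : diagonal d * diagonal d⁻¹ = 1 := by
    rw [diagonal_mul_diagonal, ← diagonal_one]
    exact congrArg diagonal (funext fun k => mul_inv_cancel₀ (hd k))
  calc L * diagonal d * Lᵀ * (Kᵀ * diagonal d⁻¹ * K)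
        = L * diagonal d * (K * L)ᵀ * diagonal d⁻¹ * K := by
        simp only [transpose_mul, Matrix.mul_assoc]
    _ = L * K := by
        rw [hKL, transpose_one, Matrix.mul_one, Matrix.mul_assoc L, hdd, Matrix.mul_one]
    _ = 1 := cumSum_mul_backwardDiff

end Matrix

theorem typeD_hiddenZ {n : ℕ} (α : Fin n → ℝ) (hpos : ∀ i, 0 < α i)
    (hmono : StrictMono α) (A : Matrix (Fin n) (Fin n) ℝ)
    (hA : ∀ i j, A i j = α (min i j)) :
    IsHiddenZ A := by
  obtain rfl : A = typeD α := Matrix.ext hA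
  have hd := backwardDiff_mulVec_pos hpos hmono
  have hX := isZMatrix_transpose_mul_diagonal_mul
    backwardDiff_apply_mul_backwardDiff_apply_nonpos fun k => (inv_pos.2 (hd k)).le
  exact isHiddenZ_of_mul_eq_one hX (typeD_mul_eq_one fun k => (hd k).ne')
end
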